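/- Let q be a prime power, let a, b be positive integers with gcd(a,b) = 1, and let S = F_q[x₁,x₂,x₃]. Set f₁ = x₂^{(q−1)b+1}x₃ − x₂x₃^{(q−1)a+1}, f₂ = x₁^{(q−1)b+1}x₃ − x₁x₃^q, f₃ = x₁^{(q−1)a+1}x₂ − x₁x₂^q, and let I = ⟨f₁, f₂, f₃⟩. Define A₁ = −Σ_{i=1}^{a} x₁^{(i−1)(q−1)b} x₂ x₃^{(q−1)a−iq+i} and A₂ = Σ_{i=1}^{b} x₁^{(i−1)(q−1)a} x₂^{(q−1)b−iq+i} x₃, and the S-linear maps φ₂ : S² → S³, (h₁,h₂) ↦ (x₁h₁, A₁h₁ + (x₁^{(q−1)a}x₂ − x₂^q)h₂, A₂h₁ − (x₁^{(q−1)b}x₃ − x₃^q)h₂), and φ₁ : S³ → S, (g₁,g₂,g₃) ↦ g₁f₁ + g₂f₂ + g₃f₃. Then the sequence 0 → S² → S³ → S → S/I → 0 is exact: φ₂ is injective, the image of φ₂ equals the kernel of φ₁, and the image of φ₁ equals I. -/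

import Mathlib

open MvPolynomial

noncomputable section

variable (F : Type) [Field F] [Fintype F]

def f1 (q a b : ℕ) : MvPolynomial (Fin 3) F :=
  X 1 ^ ((q - 1) * b + 1) * X 2 - X 1 * X 2 ^ ((q - 1) * a + 1)

def f2 (q a b : ℕ) : MvPolynomial (Fin 3) F :=
  X 0 ^ ((q - 1) * b + 1) * X 2 - X 0 * X 2 ^ q

def f3 (q a b : ℕ) : MvPolynomial (Fin 3) F :=
  X 0 ^ ((q - 1) * a + 1) * X 1 - X 0 * X 1 ^ q

/-- `A₁ = −Σ_{i=1}^{a} x₁^{(i−1)(q−1)b} x₂ x₃^{(q−1)a−iq+i}`; note that for `1 ≤ i ≤ a`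
the exponent `(q−1)a−iq+i` equals `(a−i)(q−1)`. -/
def A1 (q a b : ℕ) : MvPolynomial (Fin 3) F :=
  - ∑ i ∈ Finset.Icc 1 a, X 0 ^ ((i - 1) * (q - 1) * b) * X 1 * X 2 ^ ((a - i) * (q - 1))

/-- `A₂ = Σ_{i=1}^{b} x₁^{(i−1)(q−1)a} x₂^{(q−1)b−iq+i} x₃`; note that for `1 ≤ i ≤ b`
the exponent `(q−1)b−iq+i` equals `(b−i)(q−1)`. -/
def A2 (q a b : ℕ) : MvPolynomial (Fin 3) F :=
  ∑ i ∈ Finset.Icc 1 b, X 0 ^ ((i - 1) * (q - 1) * a) * X 1 ^ ((b - i) * (q - 1)) * X 2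

/-- The `S`-linear map `φ₂ : S² → S³` given by the matrix with columns
`(x₁, A₁, A₂)` and `(0, f₃/x₁, −f₂/x₁)`. -/
def phi2 (q a b : ℕ) :
    (MvPolynomial (Fin 3) F × MvPolynomial (Fin 3) F) →ₗ[MvPolynomial (Fin 3) F]
      (MvPolynomial (Fin 3) F × MvPolynomial (Fin 3) F × MvPolynomial (Fin 3) F) where
  toFun h := (X 0 * h.1,
      A1 F q a b * h.1 + (X 0 ^ ((q - 1) * a) * X 1 - X 1 ^ q) * h.2,
      A2 F q a b * h.1 - (X 0 ^ ((q - 1) * b) * X 2 - X 2 ^ q) * h.2)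
  map_add' x y := by
    refine Prod.ext ?_ (Prod.ext ?_ ?_) <;> simp <;> ring
  map_smul' c x := by
    refine Prod.ext ?_ (Prod.ext ?_ ?_) <;> simp [smul_eq_mul] <;> ring

/-- The `S`-linear map `φ₁ : S³ → S`, `(g₁,g₂,g₃) ↦ g₁f₁ + g₂f₂ + g₃f₃`. -/
def phi1 (q a b : ℕ) :
    (MvPolynomial (Fin 3) F × MvPolynomial (Fin 3) F × MvPolynomial (Fin 3) F)
      →ₗ[MvPolynomial (Fin 3) F] MvPolynomial (Fin 3) F where
  toFun g := g.1 * f1 F q a b + g.2.1 * f2 F q a b + g.2.2 * f3 F q a b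
  map_add' x y := by simp; ring
  map_smul' c x := by simp [smul_eq_mul]; ring

/-! Write `u = f₃/x₁` and `v = f₂/x₁`. Two telescoping (geometric) sums give
`A₁v = x₂x₃(x₃^{(q-1)a} - x₁^{(q-1)ab})` and `A₂u = x₂x₃(x₁^{(q-1)ab} - x₂^{(q-1)b})`, hence
`f₁ + A₁v + A₂u = 0`, which makes `φ₁ ∘ φ₂ = 0`. Conversely, if `(g₁, g₂, g₃)` is a syzygy of
`(f₁, x₁v, x₁u)`, the prime `x₁` divides `g₁f₁` but not `f₁`, so `g₁ = x₁h₁`, and subtracting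
`φ₂(h₁, 0)` leaves a syzygy `(r₂, r₃)` of `(v, u)`. As a polynomial in `x₂`, `u` is monic up to sign
while `v` is a nonzero constant, so `u ∣ r₂`; the quotient is `h₂`. -/

open scoped Polynomial

lemma geom_sum₂_Icc_mul {R : Type*} [CommRing R] (x y : R) (n : ℕ) :
    (∑ i ∈ Finset.Icc 1 n, x ^ (i - 1) * y ^ (n - i)) * (x - y) = x ^ n - y ^ n := by
  rw [← geom_sum₂_mul, ← Finset.Ico_add_one_right_eq_Icc, Finset.sum_Ico_eq_sum_range,
    Nat.add_sub_cancel]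
  refine congrArg (· * _) (Finset.sum_congr rfl fun i _ => ?_)
  congr 2 <;> omega

theorem Polynomial.Monic.dvd_of_dvd_mul_C {R : Type*} [CommRing R] [IsDomain R] {m p : R[X]}
    {c : R} (hm : m.Monic) (hc : c ≠ 0) (h : m ∣ p * Polynomial.C c) : m ∣ p := by
  rw [mul_comm, ← Polynomial.smul_eq_C_mul, ← Polynomial.modByMonic_eq_zero_iff_dvd hm,
    Polynomial.smul_modByMonic, smul_eq_zero] at h
  exact (Polynomial.modByMonic_eq_zero_iff_dvd hm).mp (h.resolve_left hc)

section Syzygy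

variable {R : Type*} [CommRing R] [IsDomain R] {x f₁ u v A₁ A₂ : R}

theorem injective_resolution_map (hx : x ≠ 0) (hu : u ≠ 0) :
    Function.Injective fun h : R × R => (x * h.1, A₁ * h.1 + u * h.2, A₂ * h.1 - v * h.2) := by
  rintro ⟨h₁, h₂⟩ ⟨k₁, k₂⟩ e
  simp only [Prod.mk.injEq] at e
  obtain ⟨e₁, e₂, -⟩ := e
  obtain rfl := mul_left_cancel₀ hx e₁
  exact Prod.ext rfl (mul_left_cancel₀ hu (add_left_cancel e₂))

theorem exists_eq_of_syzygy (hx : Prime x) (hxf : ¬ x ∣ f₁)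
    (hu : u ≠ 0) (huv : ∀ r, u ∣ r * v → u ∣ r) (hrel : f₁ + A₁ * v + A₂ * u = 0)
    {g₁ g₂ g₃ : R} (hg : g₁ * f₁ + g₂ * (x * v) + g₃ * (x * u) = 0) :
    ∃ h₁ h₂, x * h₁ = g₁ ∧ A₁ * h₁ + u * h₂ = g₂ ∧ A₂ * h₁ - v * h₂ = g₃ := by
  obtain ⟨h₁, rfl⟩ : x ∣ g₁ :=
    (hx.dvd_or_dvd ⟨-(g₂ * v + g₃ * u), by linear_combination hg⟩).resolve_right hxf
  have hred : (g₂ - A₁ * h₁) * v + (g₃ - A₂ * h₁) * u = 0 := by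
    refine mul_left_cancel₀ hx.ne_zero ?_
    linear_combination hg - x * h₁ * hrel
  obtain ⟨h₂, hh₂⟩ :=
    huv (g₂ - A₁ * h₁) ⟨-(g₃ - A₂ * h₁), by linear_combination hred⟩
  have hr₃ : g₃ - A₂ * h₁ = -(v * h₂) :=
    mul_left_cancel₀ hu (by linear_combination hred - v * hh₂)
  exact ⟨h₁, h₂, rfl, by linear_combination -hh₂, by linear_combination -hr₃⟩

end Syzygy

section Quotients

variable (K : Type*) [Field K] {q : ℕ}

def f2Quot (q b : ℕ) : MvPolynomial (Fin 3) K := X 0 ^ ((q - 1) * b) * X 2 - X 2 ^ q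

def f3Quot (q a : ℕ) : MvPolynomial (Fin 3) K := X 0 ^ ((q - 1) * a) * X 1 - X 1 ^ q

variable {K}

theorem f2Quot_ne_zero (hq : 1 < q) (b : ℕ) : f2Quot K q b ≠ 0 := by
  refine ne_zero_of_map (f := aeval ![1, 0, (Polynomial.X : K[X])]) ?_
  simpa [f2Quot] using neg_ne_zero.mpr (FiniteField.X_pow_card_sub_X_ne_zero K hq)

theorem f3Quot_ne_zero (hq : 1 < q) (a : ℕ) : f3Quot K q a ≠ 0 := by
  refine ne_zero_of_map (f := aeval ![1, (Polynomial.X : K[X]), 0]) ?_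
  simpa [f3Quot] using neg_ne_zero.mpr (FiniteField.X_pow_card_sub_X_ne_zero K hq)

theorem f3Quot_dvd_of_dvd_mul_f2Quot (hq : 1 < q) (a b : ℕ) {r : MvPolynomial (Fin 3) K}
    (h : f3Quot K q a ∣ r * f2Quot K q b) : f3Quot K q a ∣ r := by
  let Φ := (renameEquiv K (Equiv.swap (0 : Fin 3) 1)).trans (finSuccEquiv K 2)
  have hX₀ : Φ (X 0) = Polynomial.C (X 0) := by
    simpa [Φ, Fin.succ_zero_eq_one] using finSuccEquiv_X_succ (R := K) (j := (0 : Fin 2))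
  have hX₁ : Φ (X 1) = Polynomial.X := by simpa [Φ] using finSuccEquiv_X_zero (R := K) (n := 2)
  have hX₂ : Φ (X 2) = Polynomial.C (X 1) := by
    simp only [Φ, AlgEquiv.trans_apply, renameEquiv_apply, rename_X,
      Equiv.swap_apply_of_ne_of_ne (by decide : (2 : Fin 3) ≠ 0) (by decide : (2 : Fin 3) ≠ 1)]
    rw [show (2 : Fin 3) = Fin.succ 1 from rfl, finSuccEquiv_X_succ]
  set m : (MvPolynomial (Fin 2) K)[X] :=
    Polynomial.X ^ q - Polynomial.C (X 0 ^ ((q - 1) * a)) * Polynomial.X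
  set c : MvPolynomial (Fin 2) K := X 0 ^ ((q - 1) * b) * X 1 - X 1 ^ q
  have hu : Φ (f3Quot K q a) = -m := by
    simp only [f3Quot, m, map_sub, map_mul, map_pow, hX₀, hX₁]
    ring
  have hv : Φ (f2Quot K q b) = Polynomial.C c := by
    simp only [f2Quot, c, map_sub, map_mul, map_pow, hX₀, hX₂]
  have hm : m.Monic :=
    Polynomial.monic_X_pow_sub (Polynomial.degree_C_mul_X_le _ |>.trans_lt (by exact_mod_cast hq))
  have hc : c ≠ 0 := by
    rintro hc
    exact f2Quot_ne_zero hq b (Φ.injective (by rw [hv, hc, map_zero, map_zero]))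
  have hmr : m ∣ Φ r := by
    refine hm.dvd_of_dvd_mul_C hc ?_
    rw [← neg_dvd, ← hu, ← hv, ← map_mul]
    exact map_dvd Φ h
  rw [← neg_dvd, ← hu] at hmr
  simpa using map_dvd Φ.symm hmr

end Quotients

section Resolution

variable {K : Type} [Field K] {q : ℕ}

theorem f2_eq_X_mul (a b : ℕ) : f2 K q a b = X 0 * f2Quot K q b := by
  rw [f2, f2Quot]
  ring

theorem f3_eq_X_mul (a b : ℕ) : f3 K q a b = X 0 * f3Quot K q a := by
  rw [f3, f3Quot]
  ring

theorem A1_mul_f2Quot (hq : 1 ≤ q) (a b : ℕ) :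
    A1 K q a b * f2Quot K q b =
      X 1 * X 2 * ((X 2 ^ (q - 1)) ^ a - (X 0 ^ ((q - 1) * b)) ^ a) := by
  have hA : A1 K q a b = -(X 1 * ∑ i ∈ Finset.Icc 1 a,
      (X 0 ^ ((q - 1) * b)) ^ (i - 1) * (X 2 ^ (q - 1)) ^ (a - i)) := by
    rw [A1, Finset.mul_sum]
    exact congrArg _ (Finset.sum_congr rfl fun i _ => by ring)
  have hv : f2Quot K q b = X 2 * (X 0 ^ ((q - 1) * b) - X 2 ^ (q - 1)) := by
    rw [mul_sub, ← pow_succ', Nat.sub_add_cancel hq, f2Quot]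
    ring
  rw [hA, hv]
  linear_combination -(X 1 * X 2) *
    geom_sum₂_Icc_mul (R := MvPolynomial (Fin 3) K) (X 0 ^ ((q - 1) * b)) (X 2 ^ (q - 1)) a

theorem A2_mul_f3Quot (hq : 1 ≤ q) (a b : ℕ) :
    A2 K q a b * f3Quot K q a =
      X 1 * X 2 * ((X 0 ^ ((q - 1) * a)) ^ b - (X 1 ^ (q - 1)) ^ b) := by
  have hA : A2 K q a b = X 2 * ∑ i ∈ Finset.Icc 1 b,
      (X 0 ^ ((q - 1) * a)) ^ (i - 1) * (X 1 ^ (q - 1)) ^ (b - i) := by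
    rw [A2, Finset.mul_sum]
    exact Finset.sum_congr rfl fun i _ => by ring
  have hu : f3Quot K q a = X 1 * (X 0 ^ ((q - 1) * a) - X 1 ^ (q - 1)) := by
    rw [mul_sub, ← pow_succ', Nat.sub_add_cancel hq, f3Quot]
    ring
  rw [hA, hu]
  linear_combination X 1 * X 2 *
    geom_sum₂_Icc_mul (R := MvPolynomial (Fin 3) K) (X 0 ^ ((q - 1) * a)) (X 1 ^ (q - 1)) b

theorem f1_add_A1_mul_add_A2_mul (hq : 1 ≤ q) (a b : ℕ) :
    f1 K q a b + A1 K q a b * f2Quot K q b + A2 K q a b * f3Quot K q a = 0 := by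
  rw [A1_mul_f2Quot hq, A2_mul_f3Quot hq, f1]
  ring

theorem not_X_zero_dvd_f1 (hq : 1 < q) (a : ℕ) {b : ℕ} (hb : 0 < b) :
    ¬ X 0 ∣ f1 K q a b := by
  rintro ⟨k, hk⟩
  have := congrArg (aeval ![0, (Polynomial.X : K[X]), 1]) hk
  refine FiniteField.X_pow_card_sub_X_ne_zero K ?_ (by simpa [f1] using this)
  have := Nat.mul_pos (Nat.sub_pos_of_lt hq) hb
  omega

theorem phi1_apply (a b : ℕ)
    (g : MvPolynomial (Fin 3) K × MvPolynomial (Fin 3) K × MvPolynomial (Fin 3) K) :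
    phi1 K q a b g =
      g.1 * f1 K q a b + g.2.1 * (X 0 * f2Quot K q b) + g.2.2 * (X 0 * f3Quot K q a) := by
  rw [← f2_eq_X_mul, ← f3_eq_X_mul]
  rfl

theorem phi2_apply (a b : ℕ) (h : MvPolynomial (Fin 3) K × MvPolynomial (Fin 3) K) :
    phi2 K q a b h = (X 0 * h.1, A1 K q a b * h.1 + f3Quot K q a * h.2,
      A2 K q a b * h.1 - f2Quot K q b * h.2) :=
  rfl

end Resolution

theorem resolution_P1ab_exact (q : ℕ) (hq : q = Fintype.card F) (a b : ℕ)
    (hb : 0 < b) :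
    Function.Injective (phi2 F q a b) ∧
    LinearMap.range (phi2 F q a b) = LinearMap.ker (phi1 F q a b) ∧
    LinearMap.range (phi1 F q a b) =
      Ideal.span {f1 F q a b, f2 F q a b, f3 F q a b} := by
  have hq₁ : 1 < q := hq ▸ Fintype.one_lt_card
  have hrel := f1_add_A1_mul_add_A2_mul (K := F) hq₁.le a b
  refine ⟨injective_resolution_map (X_ne_zero 0) (f3Quot_ne_zero hq₁ a),
    le_antisymm ?_ ?_, ?_⟩
  · rintro _ ⟨h, rfl⟩
    rw [LinearMap.mem_ker, phi1_apply, phi2_apply]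
    linear_combination (X 0 * h.1) * hrel
  · intro g hg
    rw [LinearMap.mem_ker, phi1_apply] at hg
    obtain ⟨h₁, h₂, e₁, e₂, e₃⟩ := exists_eq_of_syzygy X_prime
      (not_X_zero_dvd_f1 hq₁ a hb) (f3Quot_ne_zero hq₁ a)
      (fun _ => f3Quot_dvd_of_dvd_mul_f2Quot hq₁ a b) hrel hg
    exact ⟨(h₁, h₂), Prod.ext e₁ (Prod.ext e₂ e₃)⟩
  · ext p
    simp [phi1, Submodule.mem_span_triple]
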